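/- arXiv:0903.3814 — 9 statements merged into one kernel-verified Lean document; each statement's English description precedes it below -/
import Mathlib

section
/- Let A be a (not necessarily unital) associative algebra over the complex numbers and W a linear representation of A via an algebra homomorphism ρ: A → End(W). Extend the action of A to the d-fold tensor power W^{⊗d} by derivations, i.e. a·(w_1 ⊗ ⋯ ⊗ w_d) = Σ_i w_1 ⊗ ⋯ ⊗ a·w_i ⊗ ⋯ ⊗ w_d, and extend this to an algebra homomorphism from the universal enveloping algebra U(A) of A (viewed as a Lie algebra with commutator bracket) to End(W^{⊗d}). Let E ⊂ End(W^{⊗d}) be the span of the images of all elements of U(A), and let E_r be the span of the images of elements of U(A) of degree at most r. Then E = E_d. -/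
/-! Write `D(a) = Σᵢ a⁽ⁱ⁾` for the Leibniz operator, `a⁽ⁱ⁾` being `a` acting on the `i`-th tensor
factor, and `P_k(b) = Σ_ψ b₁^(ψ 1) ⋯ b_k^(ψ k)` for the sum over injective `ψ : Fin k ↪ ι`, which
vanishes once `k` exceeds the number of factors. Splitting `D(c)` into the slots not used by `ψ`
and those used by it gives `D(c) P_k(b) = P_{k+1}(c, b) + Σ_m P_k(b₁, …, c b_m, …, b_k)`.
Read one way, the span of the `P_k` is stable under left multiplication by `D(c)`, so it contains
every word in the `D(a)`; read the other way, by induction `P_k(b)` is a combination of words of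
length at most `k`. -/

open scoped TensorProduct

/-- The `d`-fold tensor power `W^{⊗d}`. -/
abbrev TPow (W : Type) [AddCommGroup W] [Module ℂ W] (d : ℕ) : Type :=
  PiTensorProduct ℂ (fun _ : Fin d => W)

/-- The derivation (Leibniz) action of an endomorphism `f` of `W` on `W^{⊗d}`:
`w_1 ⊗ ⋯ ⊗ w_d ↦ Σ_i w_1 ⊗ ⋯ ⊗ f(w_i) ⊗ ⋯ ⊗ w_d`. -/
noncomputable def derAction (W : Type) [AddCommGroup W] [Module ℂ W] (d : ℕ)
    (f : Module.End ℂ W) : Module.End ℂ (TPow W d) :=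
  ∑ i : Fin d, PiTensorProduct.map
    (Function.update (fun _ : Fin d => (LinearMap.id : W →ₗ[ℂ] W)) i f)

theorem Submodule.mul_mem_span_of_forall_mem {R A : Type*} [CommSemiring R] [Semiring A]
    [Algebra R A] {S T : Set A} {x y : A} (hy : y ∈ span R S)
    (h : ∀ s ∈ S, x * s ∈ span R T) : x * y ∈ span R T :=
  span_le.2 (show S ⊆ (span R T).comap (LinearMap.mulLeft R x) from h) hy

namespace PiTensorProduct

section Semiring

variable {R : Type*} [CommSemiring R] {W : Type*} [AddCommMonoid W] [Module R W]
  {ι : Type*} [DecidableEq ι]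

noncomputable def onFactor (i : ι) : Module.End R W →* Module.End R (⨂[R] _ : ι, W) :=
  (mapMonoidHom (R := R) (s := fun _ : ι => W)).comp
    (MonoidHom.mulSingle (fun _ : ι => Module.End R W) i)

theorem commute_onFactor {i j : ι} (hij : i ≠ j) (f g : Module.End R W) :
    Commute (onFactor i f) (onFactor j g : Module.End R (⨂[R] _ : ι, W)) :=
  (Pi.mulSingle_commute (f := fun _ : ι => Module.End R W) hij f g).map mapMonoidHom

noncomputable def slotProd {k : ℕ} (ψ : Fin k → ι) (a : Fin k → Module.End R W) :
    Module.End R (⨂[R] _ : ι, W) :=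
  (List.ofFn fun m => onFactor (ψ m) (a m)).prod

theorem slotProd_cons {k : ℕ} (j : ι) (ψ : Fin k → ι) (f : Module.End R W)
    (a : Fin k → Module.End R W) :
    slotProd (Fin.cons j ψ) (Fin.cons f a) = onFactor j f * slotProd ψ a := by
  simp [slotProd, List.ofFn_succ]

theorem onFactor_mul_slotProd {k : ℕ} {ψ : Fin k → ι} (hψ : Function.Injective ψ) (m : Fin k)
    (f : Module.End R W) (a : Fin k → Module.End R W) :
    onFactor (ψ m) f * slotProd ψ a = slotProd ψ (Function.update a m (f * a m)) := by
  induction k with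
  | zero => exact m.elim0
  | succ k ih =>
    obtain ⟨j, ψ, rfl⟩ : ∃ j ψ', ψ = Fin.cons j ψ' := ⟨_, _, (Fin.cons_self_tail ψ).symm⟩
    obtain ⟨g, a, rfl⟩ : ∃ g a', a = Fin.cons g a' := ⟨_, _, (Fin.cons_self_tail a).symm⟩
    obtain ⟨hj, hψ⟩ := Fin.cons_injective_iff.mp hψ
    cases m using Fin.cases with
    | zero =>
      rw [Fin.cons_zero, Fin.cons_zero, Fin.update_cons_zero, slotProd_cons, slotProd_cons,
        ← mul_assoc, ← map_mul]
    | succ m =>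
      have hne : ψ m ≠ j := fun h => hj ⟨m, h⟩
      rw [Fin.cons_succ, Fin.cons_succ, ← Fin.cons_update, slotProd_cons, slotProd_cons,
        ← mul_assoc, (commute_onFactor hne f g).eq, mul_assoc, ih hψ]

variable (ι) [Fintype ι]

noncomputable def leibnizEnd (f : Module.End R W) : Module.End R (⨂[R] _ : ι, W) :=
  ∑ i, onFactor i f

noncomputable def distinctSlotSum {k : ℕ} (a : Fin k → Module.End R W) :
    Module.End R (⨂[R] _ : ι, W) :=
  ∑ ψ : Fin k ↪ ι, slotProd ψ a

theorem distinctSlotSum_zero (a : Fin 0 → Module.End R W) : distinctSlotSum ι a = 1 := by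
  simp [distinctSlotSum, slotProd]

theorem distinctSlotSum_eq_zero_of_card_lt {k : ℕ} (hk : Fintype.card ι < k)
    (a : Fin k → Module.End R W) : distinctSlotSum ι a = 0 := by
  have : IsEmpty (Fin k ↪ ι) := Function.Embedding.isEmpty_of_card_lt (by simpa using hk)
  simp [distinctSlotSum]

theorem leibnizEnd_mul_distinctSlotSum {k : ℕ} (f : Module.End R W)
    (a : Fin k → Module.End R W) :
    leibnizEnd ι f * distinctSlotSum ι a =
      distinctSlotSum ι (Fin.cons f a) +
        ∑ m, distinctSlotSum ι (Function.update a m (f * a m)) := by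
  classical
  have split (ψ : Fin k ↪ ι) : leibnizEnd ι f * slotProd ψ a =
      ∑ j : {j // j ∉ Set.range ψ}, slotProd (Fin.cons (j : ι) ψ) (Fin.cons f a) +
        ∑ m, slotProd ψ (Function.update a m (f * a m)) := by
    rw [leibnizEnd, Finset.sum_mul,
      ← Fintype.sum_subtype_add_sum_subtype (fun j => j ∉ Set.range ψ)]
    congr 1
    · simp_rw [slotProd_cons]
    · rw [← ((Equiv.ofInjective ψ ψ.injective).trans
        (Equiv.subtypeEquivRight fun _ => not_not.symm)).sum_comp]
      exact Finset.sum_congr rfl fun m _ => onFactor_mul_slotProd ψ.injective m f a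
  simp_rw [distinctSlotSum, Finset.mul_sum, split, Finset.sum_add_distrib]
  congr 1
  · rw [← (Equiv.embeddingFinSucc k ι).symm.sum_comp, Fintype.sum_sigma]
    simp [Equiv.coe_embeddingFinSucc_symm]
  · exact Finset.sum_comm

end Semiring

section Span

variable {R : Type*} [CommRing R] {W : Type*} [AddCommGroup W] [Module R W]
  (ι : Type*) [Fintype ι] [DecidableEq ι] {M : Type*} [Mul M] (ρ : M →ₙ* Module.End R W)

def wordSpan (r : ℕ) : Submodule R (Module.End R (⨂[R] _ : ι, W)) :=
  Submodule.span R
    {g | ∃ l : List M, l.length ≤ r ∧ g = (l.map fun a => leibnizEnd ι (ρ a)).prod}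

theorem wordSpan_mono {r s : ℕ} (h : r ≤ s) : wordSpan ι ρ r ≤ wordSpan ι ρ s :=
  Submodule.span_mono fun _ ⟨l, hl, hg⟩ => ⟨l, hl.trans h, hg⟩

theorem leibnizEnd_mul_mem_wordSpan (c : M) {r : ℕ} {x : Module.End R (⨂[R] _ : ι, W)}
    (hx : x ∈ wordSpan ι ρ r) : leibnizEnd ι (ρ c) * x ∈ wordSpan ι ρ (r + 1) :=
  Submodule.mul_mem_span_of_forall_mem hx fun _ ⟨l, hl, hg⟩ =>
    Submodule.subset_span ⟨c :: l, by simpa using hl, by simp [hg]⟩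

theorem distinctSlotSum_comp_mem_wordSpan :
    ∀ {k : ℕ} (b : Fin k → M), distinctSlotSum ι (ρ ∘ b) ∈ wordSpan ι ρ k
  | 0, b => by
    rw [distinctSlotSum_zero]
    exact Submodule.subset_span ⟨[], by simp, by simp⟩
  | k + 1, b => by
    obtain ⟨c, b, rfl⟩ : ∃ c b', b = Fin.cons c b' := ⟨_, _, (Fin.cons_self_tail b).symm⟩
    rw [Fin.comp_cons, eq_sub_of_add_eq (leibnizEnd_mul_distinctSlotSum ι (ρ c) (ρ ∘ b)).symm]
    refine sub_mem (leibnizEnd_mul_mem_wordSpan ι ρ c (distinctSlotSum_comp_mem_wordSpan b))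
      (Submodule.sum_mem _ fun m _ => ?_)
    rw [Function.comp_apply, ← map_mul, ← Function.comp_update]
    exact wordSpan_mono ι ρ k.le_succ (distinctSlotSum_comp_mem_wordSpan _)

theorem list_prod_mem_span_distinctSlotSum (l : List M) :
    (l.map fun a => leibnizEnd ι (ρ a)).prod ∈
      Submodule.span R {g | ∃ (k : ℕ) (b : Fin k → M), g = distinctSlotSum ι (ρ ∘ b)} := by
  induction l with
  | nil => exact Submodule.subset_span ⟨0, Fin.elim0, (distinctSlotSum_zero ι _).symm⟩
  | cons c l ih =>
    rw [List.map_cons, List.prod_cons]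
    refine Submodule.mul_mem_span_of_forall_mem ih ?_
    rintro _ ⟨k, b, rfl⟩
    rw [leibnizEnd_mul_distinctSlotSum, ← Fin.comp_cons]
    refine add_mem (Submodule.subset_span ⟨k + 1, _, rfl⟩) (Submodule.sum_mem _ fun m _ =>
      Submodule.subset_span ⟨k, Function.update b m (c * b m), ?_⟩)
    rw [Function.comp_update, map_mul]
    rfl

theorem span_list_prod_leibnizEnd_eq_wordSpan :
    Submodule.span R {g | ∃ l : List M, g = (l.map fun a => leibnizEnd ι (ρ a)).prod} =
      wordSpan ι ρ (Fintype.card ι) := by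
  refine le_antisymm (Submodule.span_le.2 ?_) (Submodule.span_mono fun _ ⟨l, _, hg⟩ => ⟨l, hg⟩)
  rintro _ ⟨l, rfl⟩
  refine Submodule.span_le.2 ?_ (list_prod_mem_span_distinctSlotSum ι ρ l)
  rintro _ ⟨k, b, rfl⟩
  rcases le_or_gt k (Fintype.card ι) with hk | hk
  · exact wordSpan_mono ι ρ hk (distinctSlotSum_comp_mem_wordSpan ι ρ b)
  · rw [distinctSlotSum_eq_zero_of_card_lt ι hk]
    exact zero_mem _

end Span

end PiTensorProduct

theorem derAction_eq_leibnizEnd (W : Type) [AddCommGroup W] [Module ℂ W] (d : ℕ)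
    (f : Module.End ℂ W) : derAction W d f = PiTensorProduct.leibnizEnd (Fin d) f :=
  rfl

theorem span_all_eq_span_deg_le_d_general
    (A : Type) [NonUnitalRing A] [Module ℂ A]
    (W : Type) [AddCommGroup W] [Module ℂ W]
    (ρ : A →ₙₐ[ℂ] Module.End ℂ W) (d : ℕ) :
    Submodule.span ℂ {g : Module.End ℂ (TPow W d) |
        ∃ l : List A, g = (l.map fun a => derAction W d (ρ a)).prod}
      = Submodule.span ℂ {g : Module.End ℂ (TPow W d) |
        ∃ l : List A, l.length ≤ d ∧ g = (l.map fun a => derAction W d (ρ a)).prod} := by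
  have h := PiTensorProduct.span_list_prod_leibnizEnd_eq_wordSpan (Fin d)
    (ρ : A →ₙ* Module.End ℂ W)
  rw [Fintype.card_fin] at h
  simp only [derAction_eq_leibnizEnd]
  exact h

/-- Let `A` be a (not necessarily unital) associative `ℂ`-algebra acting on `W` via a
(non-unital) algebra homomorphism `ρ : A → End(W)`, with the Leibniz action on `W^{⊗d}`
extended to the universal enveloping algebra `U(A)` of `A` (with commutator bracket); the image
of a monomial `a_1 * ⋯ * a_r ∈ U(A)` in `End(W^{⊗d})` is the composition of the derivation
actions of the `a_i`. Then the span `E` of the images of all elements of `U(A)` equals the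
span `E_d` of the images of elements of degree at most `d`. -/
theorem span_all_eq_span_deg_le_d
    (A : Type) [NonUnitalRing A] [Module ℂ A] [SMulCommClass ℂ A A] [IsScalarTower ℂ A A]
    (W : Type) [AddCommGroup W] [Module ℂ W]
    (ρ : A →ₙₐ[ℂ] Module.End ℂ W) (d : ℕ) (hd : 1 ≤ d) :
    Submodule.span ℂ {g : Module.End ℂ (TPow W d) |
        ∃ l : List A, g = (l.map fun a => derAction W d (ρ a)).prod}
      = Submodule.span ℂ {g : Module.End ℂ (TPow W d) |
        ∃ l : List A, l.length ≤ d ∧ g = (l.map fun a => derAction W d (ρ a)).prod} :=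
  span_all_eq_span_deg_le_d_general A W ρ d
end

section
/- Let A be an associative ℂ-algebra acting on a vector space W, and extend the action to the symmetric power Sym^d(W) by derivations, then to the universal enveloping algebra U(A) of the underlying Lie algebra of A. Let f ∈ Sym^d(W) and let M ⊂ Sym^d(W) be the cyclic U(A)-submodule generated by f. Then M is spanned by the elements μ·f where μ ranges over elements of U(A) of degree at most d. -/
open scoped TensorProduct

/-- The submodule of symmetrization relations `t − σ·t`, so that
`Sym^d(W) = W^{⊗d} / symRel`. -/
noncomputable def symRel (W : Type) [AddCommGroup W] [Module ℂ W] (d : ℕ) :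
    Submodule ℂ (TPow W d) :=
  Submodule.span ℂ {x | ∃ (σ : Equiv.Perm (Fin d)) (t : TPow W d),
    x = t - PiTensorProduct.reindex ℂ (fun _ : Fin d => W) σ t}

/-- The `d`-th symmetric power `Sym^d(W)` as a quotient of `W^{⊗d}`. -/
abbrev SymPow (W : Type) [AddCommGroup W] [Module ℂ W] (d : ℕ) : Type :=
  TPow W d ⧸ symRel W d

/-!
Write `D_a` for the derivation action of `a` on `W^{⊗d}` and `T(a₁, …, aₙ)` for the sum, over
all injective placements `g : Fin n ↪ Fin d`, of the operator acting by `ρ aⱼ` on the factor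
`g j` and trivially elsewhere. Splitting the slots hit by `D_a` into those outside and inside the
range of `g` gives `D_a T(c) = T(a, c) + ∑ⱼ T(c with cⱼ replaced by a cⱼ)`, because
`ρ a ∘ ρ cⱼ = ρ (a cⱼ)`. By induction, `T` of `n` letters is a combination of at most `n`-fold
products of derivation actions, and `D_{a₁} ⋯ D_{aₙ} - T(a₁, …, aₙ)` one of at most
`(n - 1)`-fold products. For `n > d` there is no injective placement, so `T = 0` and every
product of more than `d` derivation actions is a combination of shorter ones.
-/

section Placement

variable {W : Type} [AddCommGroup W] [Module ℂ W] {d n : ℕ}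

noncomputable def placedMap (g : Fin n ↪ Fin d) (f : Fin n → Module.End ℂ W) :
    Module.End ℂ (TPow W d) :=
  PiTensorProduct.map (Function.extend g f fun _ => LinearMap.id)

variable (d) in
noncomputable def placedSum (f : Fin n → Module.End ℂ W) : Module.End ℂ (TPow W d) :=
  ∑ g : Fin n ↪ Fin d, placedMap g f

theorem placedSum_fin_zero (f : Fin 0 → Module.End ℂ W) : placedSum d f = 1 := by
  have hid : (Function.extend (default : Fin 0 ↪ Fin d) f fun _ => LinearMap.id) =
      fun _ => LinearMap.id :=
    funext fun _ => Function.extend_apply' _ _ _ fun ⟨j, _⟩ => j.elim0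
  rw [placedSum, Fintype.sum_unique, placedMap, hid, PiTensorProduct.map_id]
  rfl

theorem placedSum_eq_zero_of_lt (h : d < n) (f : Fin n → Module.End ℂ W) :
    placedSum d f = 0 := by
  have : IsEmpty (Fin n ↪ Fin d) := Function.Embedding.isEmpty_of_card_lt (by simpa)
  simp [placedSum]

theorem map_update_apply_mul_placedMap (x : Module.End ℂ W) (g : Fin n ↪ Fin d)
    (f : Fin n → Module.End ℂ W) (j : Fin n) :
    PiTensorProduct.map (Function.update (fun _ => LinearMap.id) (g j) x) * placedMap g f =
      placedMap g (Function.update f j (x * f j)) := by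
  rw [placedMap, placedMap, ← PiTensorProduct.map_mul]
  congr 1
  funext k
  by_cases hk : ∃ j', g j' = k
  · obtain ⟨j', rfl⟩ := hk
    rw [g.injective.extend_apply, g.injective.extend_apply]
    rcases eq_or_ne j' j with rfl | hj
    · simp
    · rw [Function.update_of_ne (g.injective.ne hj), Function.update_of_ne hj]
      rfl
  · rw [Function.extend_apply' _ _ _ hk, Function.extend_apply' _ _ _ hk,
      Function.update_of_ne (by rintro rfl; exact hk ⟨j, rfl⟩)]
    rfl

theorem map_update_mul_placedMap_of_notMem_range (x : Module.End ℂ W) (g : Fin n ↪ Fin d)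
    (f : Fin n → Module.End ℂ W) {i : Fin d} (hi : i ∉ Set.range g) :
    PiTensorProduct.map (Function.update (fun _ => LinearMap.id) i x) * placedMap g f =
      placedMap ((Equiv.embeddingFinSucc n (Fin d)).symm ⟨g, i, hi⟩) (Fin.cons x f) := by
  set e := (Equiv.embeddingFinSucc n (Fin d)).symm ⟨g, i, hi⟩
  have he0 : e 0 = i := by simp [e]
  have hesucc (j : Fin n) : e j.succ = g j := by simp [e]
  rw [placedMap, placedMap, ← PiTensorProduct.map_mul]
  congr 1
  funext k
  by_cases hk : ∃ j, g j = k
  · obtain ⟨j, rfl⟩ := hk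
    rw [Function.update_of_ne fun h => hi ⟨j, h⟩, g.injective.extend_apply, ← hesucc,
      e.injective.extend_apply, Fin.cons_succ]
    rfl
  · rcases eq_or_ne k i with rfl | hki
    · rw [Function.update_self, Function.extend_apply' _ _ _ hk, ← he0,
        e.injective.extend_apply, Fin.cons_zero]
      rfl
    · have hke : ¬∃ j, e j = k := by
        rintro ⟨j, rfl⟩
        cases j using Fin.cases with
        | zero => exact hki he0
        | succ j => exact hk ⟨j, hesucc j⟩
      rw [Function.update_of_ne hki, Function.extend_apply' _ _ _ hk,
        Function.extend_apply' _ _ _ hke]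
      rfl

theorem derAction_mul_placedSum (x : Module.End ℂ W) (f : Fin n → Module.End ℂ W) :
    derAction W d x * placedSum d f =
      placedSum d (Fin.cons x f) + ∑ j, placedSum d (Function.update f j (x * f j)) := by
  classical
  let M (i : Fin d) : Module.End ℂ (TPow W d) :=
    PiTensorProduct.map (Function.update (fun _ => LinearMap.id) i x)
  have hsplit (g : Fin n ↪ Fin d) : ∑ i, M i * placedMap g f =
      ∑ j, placedMap g (Function.update f j (x * f j)) +
        ∑ i : {i // i ∉ Set.range g},
          placedMap ((Equiv.embeddingFinSucc n (Fin d)).symm ⟨g, i⟩) (Fin.cons x f) := by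
    rw [← Fintype.sum_subtype_add_sum_subtype (· ∈ Set.range g)]
    congr 1
    · convert (Fintype.sum_equiv (Equiv.ofInjective g g.injective)
        (fun j => placedMap g (Function.update f j (x * f j))) (fun i => M i * placedMap g f)
        fun j => (map_update_apply_mul_placedMap x g f j).symm).symm
    · exact Fintype.sum_congr _ _ fun i => map_update_mul_placedMap_of_notMem_range x g f i.2
  have hcons : placedSum d (Fin.cons x f) = ∑ g : Fin n ↪ Fin d, ∑ i : {i // i ∉ Set.range g},
      placedMap ((Equiv.embeddingFinSucc n (Fin d)).symm ⟨g, i⟩) (Fin.cons x f) := by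
    rw [placedSum, ← (Equiv.embeddingFinSucc n (Fin d)).symm.sum_comp, Fintype.sum_sigma]
  calc derAction W d x * placedSum d f = ∑ g, ∑ i, M i * placedMap g f := by
        rw [derAction, placedSum, Finset.sum_mul_sum, Finset.sum_comm]
    _ = _ := by
        rw [Fintype.sum_congr _ _ hsplit, Finset.sum_add_distrib, Finset.sum_comm, hcons,
          add_comm]
        rfl

end Placement

section Filtration

variable {A W : Type} [Mul A] [AddCommGroup W] [Module ℂ W]

variable (ρ : A →ₙ* Module.End ℂ W) (d : ℕ) in
noncomputable def derProd (l : List A) : Module.End ℂ (TPow W d) :=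
  (l.map fun a => derAction W d (ρ a)).prod

variable (ρ : A →ₙ* Module.End ℂ W) (d : ℕ) in
noncomputable def derFiltration (k : ℕ) : Submodule ℂ (Module.End ℂ (TPow W d)) :=
  Submodule.span ℂ {F | ∃ l : List A, l.length ≤ k ∧ F = derProd ρ d l}

variable {ρ : A →ₙ* Module.End ℂ W} {d : ℕ}

theorem derProd_cons (a : A) (l : List A) :
    derProd ρ d (a :: l) = derAction W d (ρ a) * derProd ρ d l := by
  simp [derProd]

theorem derProd_mem_derFiltration (l : List A) : derProd ρ d l ∈ derFiltration ρ d l.length :=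
  Submodule.subset_span ⟨l, le_rfl, rfl⟩

theorem derFiltration_mono {k k' : ℕ} (h : k ≤ k') :
    derFiltration ρ d k ≤ derFiltration ρ d k' :=
  Submodule.span_mono fun _ ⟨l, hl, hF⟩ => ⟨l, hl.trans h, hF⟩

theorem derAction_mul_mem_derFiltration (a : A) {k : ℕ} {F : Module.End ℂ (TPow W d)}
    (hF : F ∈ derFiltration ρ d k) : derAction W d (ρ a) * F ∈ derFiltration ρ d (k + 1) := by
  refine Submodule.span_le.2 ?_
    (Submodule.apply_mem_span_image_of_mem_span (LinearMap.mulLeft ℂ _) hF)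
  rintro _ ⟨_, ⟨l, hl, rfl⟩, rfl⟩
  exact Submodule.subset_span ⟨a :: l, by simpa using hl, (derProd_cons a l).symm⟩

theorem derProd_cons_sub_placedSum {n : ℕ} (a : A) (c : Fin n → A) :
    derProd ρ d (a :: List.ofFn c) - placedSum d (ρ ∘ Fin.cons a c) =
      derAction W d (ρ a) * (derProd ρ d (List.ofFn c) - placedSum d (ρ ∘ c)) +
        ∑ j, placedSum d (ρ ∘ Function.update c j (a * c j)) := by
  simp_rw [derProd_cons, Fin.comp_cons, mul_sub, derAction_mul_placedSum, Function.comp_update,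
    Function.comp_apply, map_mul]
  abel

theorem placedSum_comp_mem_derFiltration {n : ℕ} (c : Fin n → A) :
    placedSum d (ρ ∘ c) ∈ derFiltration ρ d n := by
  induction n with
  | zero => exact placedSum_fin_zero (ρ ∘ c) ▸ derProd_mem_derFiltration []
  | succ n ih =>
    cases c using Fin.consCases with
    | cons a c =>
      rw [Fin.comp_cons, eq_sub_of_add_eq (derAction_mul_placedSum (ρ a) (ρ ∘ c)).symm]
      refine sub_mem (derAction_mul_mem_derFiltration a (ih c)) (Submodule.sum_mem _ fun j _ => ?_)
      simpa only [Function.comp_update, Function.comp_apply, map_mul] using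
        derFiltration_mono n.le_succ (ih (Function.update c j (a * c j)))

theorem derProd_ofFn_sub_placedSum_mem {n : ℕ} (c : Fin (n + 1) → A) :
    derProd ρ d (List.ofFn c) - placedSum d (ρ ∘ c) ∈ derFiltration ρ d n := by
  induction n with
  | zero =>
    cases c using Fin.consCases with
    | cons a c =>
      rw [List.ofFn_cons, derProd_cons_sub_placedSum, placedSum_fin_zero]
      simp [derProd]
  | succ n ih =>
    cases c using Fin.consCases with
    | cons a c =>
      rw [List.ofFn_cons, derProd_cons_sub_placedSum]
      exact add_mem (derAction_mul_mem_derFiltration a (ih c))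
        (Submodule.sum_mem _ fun j _ => placedSum_comp_mem_derFiltration _)

theorem derFiltration_succ_le {n : ℕ} (h : d ≤ n) :
    derFiltration ρ d (n + 1) ≤ derFiltration ρ d n := by
  refine Submodule.span_le.2 ?_
  rintro _ ⟨l, hl, rfl⟩
  rcases hl.lt_or_eq with hl | hl
  · exact derFiltration_mono (Nat.le_of_lt_succ hl) (derProd_mem_derFiltration l)
  · have hlc : l = List.ofFn fun i : Fin (n + 1) => l.get (i.cast hl.symm) :=
      (List.ofFn_get l).symm.trans (List.ofFn_congr hl _)
    have hmem := derProd_ofFn_sub_placedSum_mem (ρ := ρ) (d := d) fun i => l.get (i.cast hl.symm)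
    rwa [placedSum_eq_zero_of_lt (by omega), sub_zero, ← hlc] at hmem

theorem derFiltration_le_deg (k : ℕ) : derFiltration ρ d k ≤ derFiltration ρ d d := by
  induction k with
  | zero => exact derFiltration_mono d.zero_le
  | succ k ih =>
    rcases le_or_gt d k with h | h
    · exact (derFiltration_succ_le h).trans ih
    · exact derFiltration_mono h

end Filtration

/-- Let `A` be an associative `ℂ`-algebra acting on `W`, with the derivation action on
`Sym^d(W)` extended to `U(A)` (monomials of `U(A)` act by composites of derivation actions,
computed on lifts to `W^{⊗d}` and pushed down to the quotient `Sym^d(W)`). If `f ∈ Sym^d(W)`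
(a class of `f̃ ∈ W^{⊗d}`), then the cyclic `U(A)`-module generated by `f` is spanned by the
elements `μ·f` with `μ ∈ U(A)` of degree at most `d`. -/
theorem cyclic_module_spanned_by_deg_le_d
    (A : Type) [NonUnitalRing A] [Module ℂ A] [SMulCommClass ℂ A A] [IsScalarTower ℂ A A]
    (W : Type) [AddCommGroup W] [Module ℂ W]
    (ρ : A →ₙₐ[ℂ] Module.End ℂ W) (d : ℕ) (ftilde : TPow W d) :
    Submodule.span ℂ {y : SymPow W d |
        ∃ l : List A, y = (symRel W d).mkQ ((l.map fun a => derAction W d (ρ a)).prod ftilde)}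
      = Submodule.span ℂ {y : SymPow W d |
        ∃ l : List A, l.length ≤ d ∧
          y = (symRel W d).mkQ ((l.map fun a => derAction W d (ρ a)).prod ftilde)} := by
  let φ : Module.End ℂ (TPow W d) →ₗ[ℂ] SymPow W d :=
    (symRel W d).mkQ ∘ₗ LinearMap.applyₗ ftilde
  have hspan : Submodule.span ℂ {y : SymPow W d | ∃ l : List A, l.length ≤ d ∧
      y = (symRel W d).mkQ ((l.map fun a => derAction W d (ρ a)).prod ftilde)} =
      (derFiltration (ρ : A →ₙ* Module.End ℂ W) d d).map φ := by
    rw [derFiltration, Submodule.map_span]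
    congr 1
    ext y
    simp [φ, derProd, eq_comm]
  refine le_antisymm ?_ (Submodule.span_mono fun y ⟨l, _, hy⟩ => ⟨l, hy⟩)
  rw [Submodule.span_le, hspan]
  rintro _ ⟨l, rfl⟩
  exact Submodule.mem_map_of_mem (derFiltration_le_deg l.length (derProd_mem_derFiltration l))
end

section
/- For any integers r ≥ 1 and m ≥ 1, the matrix T(r,m) with entries T(r,m)_{ij} = (r+i+j)!/(r+i)! for 0 ≤ i,j ≤ m satisfies: subtracting row i from row i+1 for each i transforms T(r,m) into a block matrix of the form [[1, *],[0, S]] where S is column-equivalent to T(r+1, m-1); consequently det T(r,m) ≠ 0 by induction. -/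
/-- The matrix `T(r,m)` with entries `T(r,m)_{ij} = (r+i+j)!/(r+i)!` for `0 ≤ i,j ≤ m`. -/
noncomputable def Tmat (r m : ℕ) : Matrix (Fin (m + 1)) (Fin (m + 1)) ℚ :=
  Matrix.of fun i j => ((r + (i : ℕ) + (j : ℕ)).factorial : ℚ) / ((r + (i : ℕ)).factorial : ℚ)

/-- The row-operation matrix which subtracts row `i` from row `i+1`, for each `i`. -/
noncomputable def Lmat (m : ℕ) : Matrix (Fin (m + 1)) (Fin (m + 1)) ℚ :=
  Matrix.of fun i j => if j = i then 1 else if (i : ℕ) = (j : ℕ) + 1 then -1 else 0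

/-! Every entry of column `0` of `T(r,m)` is `1`, and the difference of rows `i+1` and `i` in
column `j+1` is `(j+1)·(r+i+j+1)!/(r+i+1)! = (j+1)·T(r+1,m-1)_{ij}`. So `Lmat · T(r,m)` has first
column `e₀` and lower-right block `T(r+1,m-1) · diag(1,…,m)`, and since `det Lmat = 1` this gives
`det T(r,m) = m! · det T(r+1,m-1)`, which is nonzero by induction on `m`. -/

open Matrix Nat

section RowDifferences

variable {m : ℕ} {n : Type*} (A : Matrix (Fin (m + 2)) n ℚ)

lemma Lmat_mul_apply_zero (j : n) : (Lmat (m + 1) * A) 0 j = A 0 j := by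
  rw [mul_apply, Fintype.sum_eq_single 0 fun k hk => by simp [Lmat, hk]]
  simp [Lmat]

lemma Lmat_mul_apply_succ (i : Fin (m + 1)) (j : n) :
    (Lmat (m + 1) * A) i.succ j = A i.succ j - A i.castSucc j := by
  have hne : i.succ ≠ i.castSucc := Fin.castSucc_lt_succ.ne'
  rw [mul_apply, Fintype.sum_eq_add i.succ i.castSucc hne]
  · simp [Lmat, hne.symm, sub_eq_add_neg]
  · intro k ⟨hk₁, hk₂⟩
    have : (i : ℕ) ≠ k := fun h => hk₂ (Fin.ext (by simp [h]))
    simp [Lmat, hk₁, this]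

end RowDifferences

lemma det_Lmat (m : ℕ) : (Lmat m).det = 1 := by
  rw [det_of_isLowerTriangular _ fun i j hij => by
    have hij : (i : ℕ) < j := hij
    simp [Lmat, Fin.ne_of_gt hij, show (i : ℕ) ≠ j + 1 by omega]]
  simp [Lmat]

lemma det_eq_det_submatrix_succ_of_column_zero {R : Type*} [CommRing R] {k : ℕ}
    (B : Matrix (Fin (k + 1)) (Fin (k + 1)) R) (h₀ : B 0 0 = 1)
    (h : ∀ i : Fin k, B i.succ 0 = 0) :
    B.det = (B.submatrix Fin.succ Fin.succ).det := by
  simp [det_succ_column_zero B, Fin.sum_univ_succ, h₀, h]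

lemma Tmat_apply_zero_right (r m : ℕ) (i : Fin (m + 1)) : Tmat r m i 0 = 1 := by
  simp [Tmat, Nat.factorial_ne_zero]

/-- Both terms share the factor `(a+j+1)!/(a+1)!`, leaving `(a+j+2) - (a+1) = j+1`. -/
lemma factorial_div_sub_factorial_div (a j : ℕ) :
    ((a + j + 2)! : ℚ) / (a + 1)! - ((a + j + 1)! : ℚ) / a !
      = (a + j + 1)! / (a + 1)! * (j + 1) := by
  rw [show a + j + 2 = (a + j + 1) + 1 from rfl, Nat.factorial_succ (a + j + 1),
    Nat.factorial_succ a]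
  have : (a ! : ℚ) ≠ 0 := Nat.cast_ne_zero.2 a.factorial_ne_zero
  field_simp
  push_cast
  ring

lemma Lmat_mul_Tmat_apply_succ_succ (r m : ℕ) (i j : Fin (m + 1)) :
    (Lmat (m + 1) * Tmat r (m + 1)) i.succ j.succ = Tmat (r + 1) m i j * ((j : ℚ) + 1) := by
  rw [Lmat_mul_apply_succ]
  have := factorial_div_sub_factorial_div (r + i) j
  simp only [Tmat, of_apply, Fin.val_succ, Fin.val_castSucc]
  convert this using 3 <;> ring_nf

lemma Lmat_mul_Tmat_submatrix_succ (r m : ℕ) :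
    (Lmat (m + 1) * Tmat r (m + 1)).submatrix Fin.succ Fin.succ
      = Tmat (r + 1) m * diagonal fun j : Fin (m + 1) => (j : ℚ) + 1 := by
  ext i j
  rw [submatrix_apply, mul_diagonal, Lmat_mul_Tmat_apply_succ_succ]

lemma Lmat_mul_Tmat_apply_zero_zero (r m : ℕ) : (Lmat (m + 1) * Tmat r (m + 1)) 0 0 = 1 := by
  rw [Lmat_mul_apply_zero, Tmat_apply_zero_right]

lemma Lmat_mul_Tmat_apply_succ_zero (r m : ℕ) (i : Fin (m + 1)) :
    (Lmat (m + 1) * Tmat r (m + 1)) i.succ 0 = 0 := by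
  rw [Lmat_mul_apply_succ, Tmat_apply_zero_right, Tmat_apply_zero_right, sub_self]

lemma isUnit_diagonal_succ (k : ℕ) : IsUnit (diagonal fun j : Fin k => (j : ℚ) + 1) :=
  isUnit_diagonal.2 <| Pi.isUnit_iff.2 fun _ => IsUnit.mk0 _ (by positivity)

lemma det_Tmat_ne_zero (m : ℕ) : ∀ r, (Tmat r m).det ≠ 0 := by
  induction m with
  | zero => simp [Tmat, Nat.factorial_ne_zero]
  | succ m ih =>
    intro r
    rw [← one_mul (Tmat r (m + 1)).det, ← det_Lmat (m + 1), ← det_mul,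
      det_eq_det_submatrix_succ_of_column_zero _ (Lmat_mul_Tmat_apply_zero_zero r m)
        (Lmat_mul_Tmat_apply_succ_zero r m),
      Lmat_mul_Tmat_submatrix_succ, det_mul]
    exact mul_ne_zero (ih _) ((isUnit_iff_isUnit_det _).1 (isUnit_diagonal_succ _)).ne_zero

theorem Tmat_rowreduce_general (r m' : ℕ) :
    (Lmat (m' + 1) * Tmat r (m' + 1)) 0 0 = 1 ∧
    (∀ i : Fin (m' + 1), (Lmat (m' + 1) * Tmat r (m' + 1)) i.succ 0 = 0) ∧
    (∃ E : Matrix (Fin (m' + 1)) (Fin (m' + 1)) ℚ, IsUnit E ∧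
      (Matrix.of fun i j : Fin (m' + 1) =>
        (Lmat (m' + 1) * Tmat r (m' + 1)) i.succ j.succ) = Tmat (r + 1) m' * E) ∧
    (Tmat r (m' + 1)).det ≠ 0 :=
  ⟨Lmat_mul_Tmat_apply_zero_zero r m', Lmat_mul_Tmat_apply_succ_zero r m',
    ⟨_, isUnit_diagonal_succ _, Lmat_mul_Tmat_submatrix_succ r m'⟩, det_Tmat_ne_zero _ r⟩

/-- For `r ≥ 1` and `m ≥ 1` (here `m = m' + 1`), subtracting row `i` from row `i+1` of `T(r,m)`
transforms it into a block matrix `[[1, *],[0, S]]` whose lower-right block `S` is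
column-equivalent to `T(r+1, m-1)`; consequently `det T(r,m) ≠ 0`. -/
theorem Tmat_rowreduce (r m' : ℕ) (hr : 1 ≤ r) :
    (Lmat (m' + 1) * Tmat r (m' + 1)) 0 0 = 1 ∧
    (∀ i : Fin (m' + 1), (Lmat (m' + 1) * Tmat r (m' + 1)) i.succ 0 = 0) ∧
    (∃ E : Matrix (Fin (m' + 1)) (Fin (m' + 1)) ℚ, IsUnit E ∧
      (Matrix.of fun i j : Fin (m' + 1) =>
        (Lmat (m' + 1) * Tmat r (m' + 1)) i.succ j.succ) = Tmat (r + 1) m' * E) ∧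
    (Tmat r (m' + 1)).det ≠ 0 :=
  Tmat_rowreduce_general r m'
end

section
/- For m ≥ 0 and w ≥ 1, the (2m+2)×(2m+2) block matrix M^w = [[A, B],[C, D]], where A, B, C, D are (m+1)×(m+1) matrices with entries A_{ij} = μ^w_{j,i}, B_{ij} = μ^w_{m+1+j,i}, C_{ij} = λ^w_{j,i}, D_{ij} = λ^w_{m+1+j,i} for 0 ≤ i,j ≤ m, where λ^w_{k,l} = −l!/(l−k)! if l ≥ k and 0 otherwise, and μ^w_{k,l} = (−1)^{w+k}(w+k+l)!/(l+w)!, is invertible. -/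
/-! Since `λ^w_{k,l} = 0` for `l < k`, the block `D` vanishes, so `M^w` is invertible iff `B` and
`C` are. `C` is lower triangular with diagonal entries `-k!`. Taking the sign `(-1)^{w+m+1+j}` out
of column `j` and `(w+m+1+i)!/(i+w)!` out of row `i` leaves in `B` the rising factorials
`x_i (x_i + 1) ⋯ (x_i + j - 1)` at the distinct nodes `x_i = w+m+2+i`; these are values of monic
polynomials of degree `j`, so the determinant is a nonzero Vandermonde determinant. -/

/-- `λ^w_{k,l} = −l!/(l−k)!` if `l ≥ k` and `0` otherwise. -/
noncomputable def lamQ (w k l : ℕ) : ℚ :=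
  if k ≤ l then -((l.factorial : ℚ) / ((l - k).factorial : ℚ)) else 0

/-- `μ^w_{k,l} = (−1)^{w+k}(w+k+l)!/(l+w)!`. -/
noncomputable def muQ (w k l : ℕ) : ℚ :=
  (-1 : ℚ) ^ (w + k) * ((w + k + l).factorial : ℚ) / ((l + w).factorial : ℚ)

/-- The block matrix `M^w = [[A, B],[C, D]]` with `A_{ij} = μ^w_{j,i}`, `B_{ij} = μ^w_{m+1+j,i}`,
`C_{ij} = λ^w_{j,i}`, `D_{ij} = λ^w_{m+1+j,i}` for `0 ≤ i,j ≤ m`. -/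
noncomputable def Mmat (w m : ℕ) :
    Matrix (Fin (m + 1) ⊕ Fin (m + 1)) (Fin (m + 1) ⊕ Fin (m + 1)) ℚ :=
  Matrix.fromBlocks
    (Matrix.of fun i j : Fin (m + 1) => muQ w (j : ℕ) (i : ℕ))
    (Matrix.of fun i j : Fin (m + 1) => muQ w (m + 1 + (j : ℕ)) (i : ℕ))
    (Matrix.of fun i j : Fin (m + 1) => lamQ w (j : ℕ) (i : ℕ))
    (Matrix.of fun i j : Fin (m + 1) => lamQ w (m + 1 + (j : ℕ)) (i : ℕ))

open Matrix Polynomial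

namespace Matrix

variable {n α : Type*} [Fintype n] [DecidableEq n] [CommRing α]

theorem isUnit_fromBlocks_zero₂₂ {A B C : Matrix n n α} :
    IsUnit (fromBlocks A B C 0) ↔ IsUnit B ∧ IsUnit C := by
  have hswap : fromBlocks A B C 0 = (fromBlocks B A 0 C).submatrix id (Equiv.sumComm n n) := by
    ext (i | i) (j | j) <;> rfl
  rw [hswap, ← isUnit_fromBlocks_zero₂₁]
  exact isUnit_submatrix_equiv (Equiv.refl _) (Equiv.sumComm n n)

theorem det_eval_monic_ne_zero {K : Type*} [Field K] {n : ℕ} (p : Fin n → K[X])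
    (hdeg : ∀ j, (p j).natDegree = j) (hmonic : ∀ j, (p j).Monic) {x : Fin n → K}
    (hx : Function.Injective x) : (of fun i j => (p j).eval (x i)).det ≠ 0 := by
  rw [← det_eval_matrixOfPolynomials_eq_det_vandermonde x p hdeg hmonic]
  exact det_vandermonde_ne_zero_iff.2 hx

end Matrix

theorem lamQ_of_lt (w : ℕ) {k l : ℕ} (h : l < k) : lamQ w k l = 0 :=
  if_neg (Nat.not_le.2 h)

theorem lamQ_self (w k : ℕ) : lamQ w k k = -(k.factorial : ℚ) := by
  simp [lamQ]

theorem muQ_add (w k j l : ℕ) :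
    muQ w (k + j) l = (-1 : ℚ) ^ (w + k + j) *
      (((w + k + l).factorial : ℚ) / ((l + w).factorial : ℚ) *
        (ascPochhammer ℚ j).eval ((w + k + l + 1 : ℕ) : ℚ)) := by
  have hfac : (w + (k + j) + l).factorial
      = (w + k + l).factorial * (ascPochhammer ℕ j).eval (w + k + l + 1) := by
    rw [ascPochhammer_nat_eq_ascFactorial, Nat.factorial_mul_ascFactorial]
    ring_nf
  rw [muQ, hfac, ← ascPochhammer_eval_cast]
  push_cast
  ring

theorem det_lamQ_ne_zero (w n : ℕ) : (of fun i j : Fin n => lamQ w j i).det ≠ 0 := by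
  have hlower : (of fun i j : Fin n => lamQ w j i).IsLowerTriangular :=
    fun _ _ hij => lamQ_of_lt w hij
  rw [det_of_isLowerTriangular _ hlower]
  exact Finset.prod_ne_zero_iff.2 fun i _ => by simp [lamQ_self, Nat.factorial_ne_zero]

theorem det_muQ_ne_zero (w k n : ℕ) : (of fun i j : Fin n => muQ w (k + j) i).det ≠ 0 := by
  have hnodes : Function.Injective fun i : Fin n => ((w + k + i + 1 : ℕ) : ℚ) := by
    intro a b hab
    simp only [Nat.cast_inj] at hab
    omega
  have hpoly := det_eval_monic_ne_zero _ (fun j => ascPochhammer_natDegree ℚ j)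
    (fun j => monic_ascPochhammer ℚ j) hnodes
  simp only [muQ_add]
  refine ne_of_eq_of_ne (det_mul_row (fun j : Fin n => (-1 : ℚ) ^ (w + k + j)) _) ?_
  refine mul_ne_zero (Finset.prod_ne_zero_iff.2 fun _ _ => by simp) ?_
  refine ne_of_eq_of_ne (det_mul_column
    (fun i : Fin n => ((w + k + i).factorial : ℚ) / ((i + w).factorial : ℚ)) _) ?_
  exact mul_ne_zero (Finset.prod_ne_zero_iff.2 fun _ _ => by positivity) hpoly

theorem Mmat_isUnit_general (w m : ℕ) : IsUnit (Mmat w m) := by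
  have hD : (of fun i j : Fin (m + 1) => lamQ w (m + 1 + (j : ℕ)) (i : ℕ)) = 0 := by
    ext i j
    exact lamQ_of_lt w (by omega)
  rw [Mmat, hD, isUnit_fromBlocks_zero₂₂, isUnit_iff_isUnit_det, isUnit_iff_isUnit_det,
    isUnit_iff_ne_zero, isUnit_iff_ne_zero]
  exact ⟨det_muQ_ne_zero w (m + 1) (m + 1), det_lamQ_ne_zero w (m + 1)⟩

/-- For `m ≥ 0` and `w ≥ 1`, the `(2m+2)×(2m+2)` matrix `M^w` is invertible. -/
theorem Mmat_isUnit (w m : ℕ) (hw : 1 ≤ w) : IsUnit (Mmat w m) :=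
  Mmat_isUnit_general w m
end

section
/- Let W be a vector space with basis {β_k, γ_k : k ≥ 0}. For w ≥ 1 and k ≥ 0 define linear operators J^{w+k}(k) on W by J^{w+k}(k)(β_l) = λ^w_{k,l} β_{l+w} and J^{w+k}(k)(γ_l) = μ^w_{k,l} γ_{l+w}, where λ^w_{k,l} = −l!/(l−k)! for l ≥ k and 0 otherwise, and μ^w_{k,l} = (−1)^{w+k}(w+k+l)!/(l+w)!. Let φ: W → W be any linear map satisfying φ(γ_l) = c_l γ_{l+w} and φ(β_l) = d_l β_{l+w} for arbitrary constants c_l, d_l ∈ ℂ. Then for every m ≥ 0, the restriction of φ to the subspace W_m spanned by {β_k, γ_k : 0 ≤ k ≤ m} can be expressed uniquely as a linear combination of the restrictions of J^{w+k}(k) to W_m, for 0 ≤ k ≤ 2m+1. -/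
/-- The vector space `W` with basis `{β_k, γ_k : k ≥ 0}`: `β_k` is indexed by `Sum.inl k`
and `γ_k` by `Sum.inr k`. -/
abbrev Wsp : Type := (ℕ ⊕ ℕ) →₀ ℂ

/-- The basis vector `β_k`. -/
noncomputable def bβ (k : ℕ) : Wsp := Finsupp.single (Sum.inl k) 1

/-- The basis vector `γ_k`. -/
noncomputable def bγ (k : ℕ) : Wsp := Finsupp.single (Sum.inr k) 1

/-- `λ^w_{k,l} = −l!/(l−k)!` if `l ≥ k`, else `0`. -/
noncomputable def lam (k l : ℕ) : ℂ :=
  if k ≤ l then -((l.factorial : ℂ) / ((l - k).factorial : ℂ)) else 0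

/-- `μ^w_{k,l} = (−1)^{w+k}(w+k+l)!/(l+w)!`. -/
noncomputable def mu (w k l : ℕ) : ℂ :=
  (-1 : ℂ) ^ (w + k) * ((w + k + l).factorial : ℂ) / ((l + w).factorial : ℂ)

/-- The operator `J^{w+k}(k)`, acting by `β_l ↦ λ^w_{k,l} β_{l+w}`, `γ_l ↦ μ^w_{k,l} γ_{l+w}`. -/
noncomputable def Jop (w k : ℕ) : Wsp →ₗ[ℂ] Wsp :=
  Finsupp.lift Wsp ℂ (ℕ ⊕ ℕ) fun s =>
    match s with
    | Sum.inl l => lam k l • bβ (l + w)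
    | Sum.inr l => mu w k l • bγ (l + w)

/-- The subspace `W_m` spanned by `{β_k, γ_k : 0 ≤ k ≤ m}`. -/
noncomputable def Wm (m : ℕ) : Submodule ℂ Wsp :=
  Submodule.span ℂ {x | ∃ k ≤ m, x = bβ k ∨ x = bγ k}

/-!
With `(x)_k = x (x - 1) ⋯ (x - k + 1)` the falling factorial, `λ^w_{k,l} = -(l)_k` and
`μ^w_{k,l} = (-1)^w (-(l + w + 1))_k`. Since `φ` and every `J^{w+k}(k)` move `β_l` and `γ_l` to
multiples of `β_{l+w}` and `γ_{l+w}`, the identity on `W_m` amounts to `2m + 2` scalar equations: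
the polynomial `∑ t_k (x)_k` must take prescribed values at the `2m + 2` distinct points
`0, …, m` and `-(w + 1), …, -(m + w + 1)`. As `(x)_k` is monic of degree `k`, the matrix of this
system has the determinant of a Vandermonde matrix, so it is invertible.
-/

open Polynomial Function Matrix

theorem Matrix.mulVec_of_descPochhammer_eval_bijective {K ι : Type*} [Field K] [Fintype ι]
    {n : ℕ} (hι : Fintype.card ι = n) {v : ι → K} (hv : Injective v) :
    Bijective (of fun i (k : Fin n) => (descPochhammer K k).eval (v i)).mulVec := by
  let e := Fintype.equivFinOfCardEq hι
  let N : Matrix (Fin n) (Fin n) K := of fun i k => (descPochhammer K k).eval (v (e.symm i))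
  have hN : IsUnit N := by
    rw [isUnit_iff_isUnit_det, isUnit_iff_ne_zero,
      ← det_eval_matrixOfPolynomials_eq_det_vandermonde _ _
        (fun k => descPochhammer_natDegree K k) (fun k => monic_descPochhammer K k),
      det_vandermonde_ne_zero_iff]
    exact hv.comp e.symm.injective
  have hmulVec : (of fun i (k : Fin n) => (descPochhammer K k).eval (v i)).mulVec =
      (fun y => y ∘ e) ∘ N.mulVec := by
    ext t i
    simp [N, mulVec, dotProduct]
  rw [hmulVec]
  exact (e.arrowCongr (Equiv.refl K)).symm.bijective.comp
    ⟨mulVec_injective_iff_isUnit.mpr hN, mulVec_surjective_iff_isUnit.mpr hN⟩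

theorem descPochhammer_eval_natCast_eq_neg_lam (k l : ℕ) :
    (descPochhammer ℂ k).eval (l : ℂ) = -lam k l := by
  rw [descPochhammer_eval_eq_descFactorial, lam]
  split_ifs with h
  · rw [← Nat.factorial_mul_descFactorial h]
    push_cast
    rw [neg_neg, mul_div_cancel_left₀ _ (Nat.cast_ne_zero.mpr (Nat.factorial_ne_zero _))]
  · rw [Nat.descFactorial_eq_zero_iff_lt.mpr (not_le.mp h), Nat.cast_zero, neg_zero]

theorem descPochhammer_eval_neg_eq_mu (w k l : ℕ) :
    (descPochhammer ℂ k).eval (-((l + w + 1 : ℕ) : ℂ)) = (-1) ^ w * mu w k l := by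
  have hasc := ascPochhammer_eval_neg_eq_descPochhammer ℂ (-((l + w + 1 : ℕ) : ℂ)) k
  rw [neg_neg, ascPochhammer_nat_eq_natCast_ascFactorial] at hasc
  rw [mu, show w + k + l = l + w + k by ring, ← Nat.factorial_mul_ascFactorial, Nat.cast_mul, hasc,
    mul_div_assoc, mul_div_cancel_left₀ _ (Nat.cast_ne_zero.mpr (Nat.factorial_ne_zero _)),
    ← mul_assoc, ← mul_assoc, ← pow_add, ← pow_add, Even.neg_one_pow ⟨w + k, by ring⟩, one_mul]

theorem Jop_bβ (w k l : ℕ) : Jop w k (bβ l) = lam k l • bβ (l + w) := by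
  simp [Jop, bβ]

theorem Jop_bγ (w k l : ℕ) : Jop w k (bγ l) = mu w k l • bγ (l + w) := by
  simp [Jop, bγ]

theorem smul_bβ_inj {a b : ℂ} {l : ℕ} : a • bβ l = b • bβ l ↔ a = b :=
  (smul_left_injective ℂ (by simp [bβ])).eq_iff

theorem smul_bγ_inj {a b : ℂ} {l : ℕ} : a • bγ l = b • bγ l ↔ a = b :=
  (smul_left_injective ℂ (by simp [bγ])).eq_iff

theorem sum_smul_Jop_bβ {n : ℕ} (w l : ℕ) (t : Fin n → ℂ) :
    ∑ k : Fin n, t k • Jop w k (bβ l) = (∑ k : Fin n, t k * lam k l) • bβ (l + w) := by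
  simp only [Jop_bβ, smul_smul, Finset.sum_smul]

theorem sum_smul_Jop_bγ {n : ℕ} (w l : ℕ) (t : Fin n → ℂ) :
    ∑ k : Fin n, t k • Jop w k (bγ l) = (∑ k : Fin n, t k * mu w k l) • bγ (l + w) := by
  simp only [Jop_bγ, smul_smul, Finset.sum_smul]

theorem forall_mem_Wm_eq_iff {m : ℕ} {f g : Wsp →ₗ[ℂ] Wsp} :
    (∀ x ∈ Wm m, f x = g x) ↔ ∀ l ≤ m, f (bβ l) = g (bβ l) ∧ f (bγ l) = g (bγ l) := by
  change Set.EqOn f g (Wm m) ↔ _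
  rw [Wm, LinearMap.eqOn_span_iff]
  constructor
  · exact fun h l hl => ⟨h ⟨l, hl, .inl rfl⟩, h ⟨l, hl, .inr rfl⟩⟩
  · rintro h _ ⟨l, hl, rfl | rfl⟩
    exacts [(h l hl).1, (h l hl).2]

theorem forall_mem_Wm_eq_sum_smul_Jop_iff {w m n : ℕ} {φ : Wsp →ₗ[ℂ] Wsp} {c d : ℕ → ℂ}
    (hγ : ∀ l, φ (bγ l) = c l • bγ (l + w)) (hβ : ∀ l, φ (bβ l) = d l • bβ (l + w))
    (t : Fin n → ℂ) :
    (∀ x ∈ Wm m, φ x = ∑ k : Fin n, t k • Jop w k x) ↔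
      ∀ l ≤ m, d l = ∑ k : Fin n, t k * lam k l ∧ c l = ∑ k : Fin n, t k * mu w k l := by
  simpa only [LinearMap.sum_apply, LinearMap.smul_apply, sum_smul_Jop_bβ, sum_smul_Jop_bγ, hβ, hγ,
    smul_bβ_inj, smul_bγ_inj] using
    forall_mem_Wm_eq_iff (m := m) (f := φ) (g := ∑ k : Fin n, t k • Jop w k)

def interpolationNode (w m : ℕ) : Fin (m + 1) ⊕ Fin (m + 1) → ℂ :=
  Sum.elim (fun l => ((l : ℕ) : ℂ)) (fun l => -((l + w + 1 : ℕ) : ℂ))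

theorem interpolationNode_injective (w m : ℕ) : Injective (interpolationNode w m) := by
  refine Injective.sumElim (fun a b h => Fin.ext (by exact_mod_cast h))
    (fun a b h => Fin.ext (by simpa using h)) fun a b h => ?_
  have hsum : ((a + (b + w + 1) : ℕ) : ℂ) = 0 := by
    push_cast at h ⊢
    linear_combination h
  exact absurd (Nat.cast_eq_zero.mp hsum) (by omega)

theorem lam_mu_system_iff_mulVec_eq {w m n : ℕ} (c d : ℕ → ℂ) (t : Fin n → ℂ) :
    (∀ l ≤ m, d l = ∑ k : Fin n, t k * lam k l ∧ c l = ∑ k : Fin n, t k * mu w k l) ↔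
      (of fun i (k : Fin n) => (descPochhammer ℂ k).eval (interpolationNode w m i)) *ᵥ t =
        Sum.elim (fun l : Fin (m + 1) => -d l) (fun l : Fin (m + 1) => (-1) ^ w * c l) := by
  rw [funext_iff, Sum.forall, ← forall_and, Fin.forall_iff]
  simp_rw [Nat.lt_add_one_iff]
  refine forall₂_congr fun l hl => and_congr ?_ ?_
  · simp only [mulVec, dotProduct, of_apply, interpolationNode, Sum.elim_inl,
      descPochhammer_eval_natCast_eq_neg_lam, neg_mul, Finset.sum_neg_distrib, neg_inj,
      mul_comm (lam _ l)]
    exact eq_comm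
  · simp only [mulVec, dotProduct, of_apply, interpolationNode, Sum.elim_inr,
      descPochhammer_eval_neg_eq_mu, mul_assoc, ← Finset.mul_sum, mul_comm (mu w _ l)]
    rw [mul_right_inj' (neg_one_pow_ne_zero w)]
    exact eq_comm

theorem phi_eq_lin_comb_general (w : ℕ) (m : ℕ) (φ : Wsp →ₗ[ℂ] Wsp) (c d : ℕ → ℂ)
    (hγ : ∀ l, φ (bγ l) = c l • bγ (l + w)) (hβ : ∀ l, φ (bβ l) = d l • bβ (l + w)) :
    ∃! t : Fin (2 * m + 2) → ℂ,
      ∀ x ∈ Wm m, φ x = ∑ k : Fin (2 * m + 2), t k • Jop w (k : ℕ) x := by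
  simp_rw [forall_mem_Wm_eq_sum_smul_Jop_iff hγ hβ, lam_mu_system_iff_mulVec_eq c d]
  refine (Matrix.mulVec_of_descPochhammer_eval_bijective ?_
    (interpolationNode_injective w m)).existsUnique _
  simp only [Fintype.card_sum, Fintype.card_fin]
  omega

/-- Any linear map `φ : W → W` of weight `w ≥ 1` with `φ(γ_l) = c_l γ_{l+w}` and
`φ(β_l) = d_l β_{l+w}` restricts on `W_m` to a unique linear combination of the
restrictions of the `J^{w+k}(k)`, `0 ≤ k ≤ 2m+1`. -/
theorem phi_eq_lin_comb (w : ℕ) (hw : 1 ≤ w) (m : ℕ) (φ : Wsp →ₗ[ℂ] Wsp) (c d : ℕ → ℂ)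
    (hγ : ∀ l, φ (bγ l) = c l • bγ (l + w)) (hβ : ∀ l, φ (bβ l) = d l • bβ (l + w)) :
    ∃! t : Fin (2 * m + 2) → ℂ,
      ∀ x ∈ Wm m, φ x = ∑ k : Fin (2 * m + 2), t k • Jop w (k : ℕ) x :=
  phi_eq_lin_comb_general w m φ c d hγ hβ
end

section
/- Let A be an associative ℂ-algebra acting on W, with derivation action on W^{⊗d}. For a monomial μ = a_1 * ⋯ * a_r in U(A) (r factors from A), the restriction of the action of μ to W^{⊗d} decomposes as Φ^d_μ = Σ_{p=1}^{d} Σ_{φ ∈ Part^r_p} g_φ, where Part^r_p is the set of partitions of {1,…,r} into p disjoint nonempty subsets, and for a partition φ with blocks S_1,…,S_p (each block {i_1 < ⋯ < i_k} giving the product m_i = a_{i_1}⋯a_{i_k} in A), the operator g_φ acts on w_1 ⊗ ⋯ ⊗ w_d as the sum over all ordered p-element subsets (j_1,…,j_p) of {1,…,d} of the tensor obtained by applying m_i to the j_i-th factor for each i and leaving the other factors fixed. -/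
/-!
Expanding the product of the `r` sums `derAction (f i) = ∑ j, (f i in slot j)` gives one term
for each map `c : Fin r → Fin d` sending `i` to the slot where `f i` acts. Operators acting in
different slots commute, so the term of `c` applies in slot `s` the product, in increasing order,
of the `f i` with `c i = s`. Grouping the maps `c` by the size `p` of their image gives the
decomposition; `1 ≤ r` makes every image nonempty.
-/

open scoped TensorProduct

theorem List.prod_map_filter_finRange_succ_cons {M : Type*} [Monoid M] {r d : ℕ} (j : Fin d)
    (c : Fin r → Fin d) (s : Fin d) (g : Fin (r + 1) → M) :
    (((List.finRange (r + 1)).filter fun i =>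
        Fin.cons (α := fun _ => Fin d) j c i = s).map g).prod
      = (if j = s then g 0 else 1)
        * (((List.finRange r).filter fun i => c i = s).map fun i => g i.succ).prod := by
  rw [List.finRange_succ, List.filter_cons]
  simp only [Fin.cons_zero, Fin.cons_succ, List.filter_map, Function.comp_def]
  split_ifs <;> simp_all [List.map_map, Function.comp_def]

section

variable (W : Type) [AddCommGroup W] [Module ℂ W] (d : ℕ)

theorem derAction_mul_map (f : Module.End ℂ W) (g : Fin d → Module.End ℂ W) :
    derAction W d f * PiTensorProduct.map g
      = ∑ j : Fin d, PiTensorProduct.map fun s => (if j = s then f else 1) * g s := by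
  rw [derAction, Finset.sum_mul]
  refine Finset.sum_congr rfl fun j _ => ?_
  rw [← PiTensorProduct.map_mul]
  congr 1
  funext s
  rcases eq_or_ne j s with rfl | h
  · simp
  · simp [Function.update_of_ne (Ne.symm h), h, Module.End.one_eq_id]

theorem list_prod_derAction_eq_sum {r : ℕ} (f : Fin r → Module.End ℂ W) :
    ((List.finRange r).map fun i => derAction W d (f i)).prod
      = ∑ c : Fin r → Fin d, PiTensorProduct.map fun s =>
          (((List.finRange r).filter fun i => c i = s).map f).prod := by
  induction r with
  | zero => simp [PiTensorProduct.map_one]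
  | succ r ih =>
    conv_lhs => rw [List.finRange_succ, List.map_cons, List.prod_cons, List.map_map,
      Function.comp_def, ih fun i => f i.succ]
    rw [Finset.mul_sum, ← (Fin.consEquiv fun _ => Fin d).sum_comp, Fintype.sum_prod_type,
      Finset.sum_comm]
    refine Finset.sum_congr rfl fun c _ => ?_
    simp only [derAction_mul_map, Fin.consEquiv_apply, List.prod_map_filter_finRange_succ_cons]

end

theorem card_image_mem_Icc {r d : ℕ} (hr : 1 ≤ r) (c : Fin r → Fin d) :
    (Finset.univ.image c).card ∈ Finset.Icc 1 d := by
  have : Nonempty (Fin r) := Fin.pos_iff_nonempty.mp hr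
  refine Finset.mem_Icc.mpr ⟨Finset.card_pos.mpr (Finset.univ_nonempty.image c), ?_⟩
  simpa using Finset.card_le_univ (Finset.univ.image c)

-- A partition of `{1,…,r}` into `p` blocks together with an ordered choice of `p` distinct slots
-- is the same as a map `c : Fin r → Fin d` with `p`-element image: the blocks are its nonempty
-- fibres, and the empty fibres act as the identity.
theorem derAction_monomial_decomposition_general
    (A : Type) [NonUnitalRing A] [Module ℂ A] [SMulCommClass ℂ A A] [IsScalarTower ℂ A A]
    (W : Type) [AddCommGroup W] [Module ℂ W]
    (ρ : A →ₙₐ[ℂ] Module.End ℂ W) (d r : ℕ) (hr : 1 ≤ r) (a : Fin r → A) :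
    ((List.finRange r).map fun i => derAction W d (ρ (a i))).prod
      = ∑ p ∈ Finset.Icc 1 d,
          ∑ c ∈ Finset.univ.filter (fun c : Fin r → Fin d => (Finset.univ.image c).card = p),
            (PiTensorProduct.map (fun s : Fin d =>
              (((List.finRange r).filter fun i => c i = s).map
                fun i => (ρ (a i) : W →ₗ[ℂ] W)).prod) :
              Module.End ℂ (TPow W d)) := by
  rw [list_prod_derAction_eq_sum W d fun i => ρ (a i)]
  exact (Finset.sum_fiberwise_of_maps_to (fun c _ => card_image_mem_Icc hr c) _).symm

/-- Decomposition `Φ^d_μ = Σ_{p=1}^{d} Σ_{φ ∈ Part^r_p} g_φ`. A partition `φ` of `{1,…,r}`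
into `p` nonempty blocks together with the choice of an ordered `p`-element subset
`(j_1,…,j_p)` of `{1,…,d}` (assigning the block monomials `m_i` to distinct slots `j_i`)
is precisely the data of a function `c : Fin r → Fin d` whose image has exactly `p` elements
(blocks are the nonempty fibers of `c`, assigned to the corresponding slot). The operator
`g_φ` (summed over its ordered subsets) thus corresponds to the sum over such `c` of the map
applying, in each slot `s`, the product (in increasing order) of `ρ(a_i)` over the fiber
`c⁻¹(s)` — the empty fiber acting as the identity. -/
theorem derAction_monomial_decomposition
    (A : Type) [NonUnitalRing A] [Module ℂ A] [SMulCommClass ℂ A A] [IsScalarTower ℂ A A]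
    (W : Type) [AddCommGroup W] [Module ℂ W]
    (ρ : A →ₙₐ[ℂ] Module.End ℂ W) (d r : ℕ) (hd : 1 ≤ d) (hr : 1 ≤ r) (a : Fin r → A) :
    ((List.finRange r).map fun i => derAction W d (ρ (a i))).prod
      = ∑ p ∈ Finset.Icc 1 d,
          ∑ c ∈ Finset.univ.filter (fun c : Fin r → Fin d => (Finset.univ.image c).card = p),
            (PiTensorProduct.map (fun s : Fin d =>
              (((List.finRange r).filter fun i => c i = s).map
                fun i => (ρ (a i) : W →ₗ[ℂ] W)).prod) :
              Module.End ℂ (TPow W d)) :=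
  derAction_monomial_decomposition_general A W ρ d r hr a
end

section
/- Let A be an associative ℂ-algebra acting on W, and consider the derivation action of the Lie algebra A (and its enveloping algebra U(A)) on Sym^d(W). For each partition φ of {1,…,r} into p ≤ d nonempty blocks with associated monomials m_1,…,m_p ∈ A, the operator g_φ ∈ End(Sym^d(W)) defined by g_φ(w_1⋯w_d) = Σ_{J} (product where m_i is applied to the j_i-th factor for each i in the ordered p-subset J of {1,…,d}) lies in the span of restrictions of elements of U(A) of degree at most d. -/
/-!
Write `g(m₁,…,m_p) = ∑_j T_j(m)` already on `W^{⊗d}`, where `T_j(m)` applies `mᵢ` in slot `jᵢ`.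
Fixing `j₂,…,j_p` and letting the slot `s` of `m₁` range over all of `{1,…,d}` rather than the
free slots produces `D(m₁) ∘ g(m₂,…,m_p)`, with `D` the Leibniz action; the extra terms are those
with `s = jᵢ`, and each family of them is `g` of the `p - 1` monomials with `mᵢ` replaced by
`m₁ mᵢ`. Hence
  `g(m₁,…,m_p) = D(m₁) ∘ g(m₂,…,m_p) - ∑ᵢ g(m₂,…,m₁ mᵢ,…,m_p)`,
and induction on `p` writes `g` as a combination of products of at most `p ≤ d` operators `D(a)`.
-/

open scoped TensorProduct

theorem Fintype.sum_subtype_notMem_range {ι κ M : Type*} [Fintype ι] [Fintype κ]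
    [AddCommGroup M] [DecidableEq κ] (j : ι ↪ κ) [Fintype {s // s ∉ Set.range j}] (g : κ → M) :
    ∑ s : {s // s ∉ Set.range j}, g s = ∑ s, g s - ∑ i, g (j i) := by
  rw [← Finset.sum_subtype (Finset.univ.map j)ᶜ (by simp), eq_sub_iff_add_eq,
    ← Finset.sum_map Finset.univ j g, Finset.sum_compl_add_sum]

section

variable {W : Type} [AddCommGroup W] [Module ℂ W] {d : ℕ}

noncomputable def slotAction (s : Fin d) (f : Module.End ℂ W) : Module.End ℂ (TPow W d) :=
  PiTensorProduct.map (Function.update (fun _ : Fin d => (LinearMap.id : W →ₗ[ℂ] W)) s f)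

theorem derAction_eq_sum_slotAction (f : Module.End ℂ W) :
    derAction W d f = ∑ s, slotAction s f :=
  rfl

noncomputable def placeAction {p : ℕ} (j : Fin p → Fin d) (f : Fin p → Module.End ℂ W) :
    Module.End ℂ (TPow W d) :=
  PiTensorProduct.map fun s => (((List.finRange p).filter fun i => j i = s).map f).prod

theorem placeAction_zero (j : Fin 0 → Fin d) (f : Fin 0 → Module.End ℂ W) :
    placeAction j f = 1 := by
  simp [placeAction]

theorem placeAction_cons {p : ℕ} (s : Fin d) (j : Fin p → Fin d)
    (f : Fin (p + 1) → Module.End ℂ W) :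
    placeAction (Fin.cons s j : Fin (p + 1) → Fin d) f
      = slotAction s (f 0) * placeAction j (Fin.tail f) := by
  rw [placeAction, placeAction, slotAction, Module.End.mul_eq_comp, ← PiTensorProduct.map_comp]
  congr 1
  funext t
  rw [List.finRange_succ, List.filter_cons, List.filter_map]
  by_cases h : s = t
  · subst h
    simp only [Fin.cons_zero, decide_true, ↓reduceIte, Function.comp_def, Fin.cons_succ,
      List.map_cons, List.map_map, List.prod_cons, Function.update_self]
    rfl
  · simp only [Fin.cons_zero, h, decide_false, Bool.false_eq_true, ↓reduceIte,
      Function.comp_def, Fin.cons_succ, List.map_map, Function.update_of_ne (Ne.symm h),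
      LinearMap.id_comp]
    rfl

theorem slotAction_mul_placeAction {p : ℕ} {j : Fin p → Fin d} (hj : j.Injective)
    (i : Fin p) (g : Module.End ℂ W) (f : Fin p → Module.End ℂ W) :
    slotAction (j i) g * placeAction j f = placeAction j (Function.update f i (g * f i)) := by
  rw [placeAction, placeAction, slotAction, Module.End.mul_eq_comp, ← PiTensorProduct.map_comp]
  congr 1
  funext t
  by_cases h : j i = t
  · subst h
    have hfilter : (List.finRange p).filter (fun x => j x = j i) = [i] := by
      simp only [hj.eq_iff]
      rw [List.filter_eq, List.count_eq_one_of_mem (List.nodup_finRange p) (List.mem_finRange i)]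
      rfl
    simp only [Function.update_self, hfilter, List.map_cons, List.map_nil, List.prod_cons,
      List.prod_nil, mul_one]
    rfl
  · rw [Function.update_of_ne (Ne.symm h), LinearMap.id_comp]
    congr 1
    refine List.map_congr_left fun x hx => Function.update_of_ne ?_ _ _ |>.symm
    rintro rfl
    exact h (by simpa using (List.mem_filter.1 hx).2)

theorem sum_placeAction_succ {p : ℕ} (f : Fin (p + 1) → Module.End ℂ W) :
    ∑ j : Fin (p + 1) ↪ Fin d, placeAction j f
      = derAction W d (f 0) * ∑ j : Fin p ↪ Fin d, placeAction j (Fin.tail f)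
        - ∑ i, ∑ j : Fin p ↪ Fin d,
            placeAction j (Function.update (Fin.tail f) i (f 0 * Fin.tail f i)) := by
  rw [← (Equiv.embeddingFinSucc p (Fin d)).symm.sum_comp, Fintype.sum_sigma, Finset.mul_sum,
    Finset.sum_comm (γ := Fin p), ← Finset.sum_sub_distrib]
  refine Fintype.sum_congr _ _ fun j => ?_
  simp only [Equiv.coe_embeddingFinSucc_symm, placeAction_cons]
  rw [Fintype.sum_subtype_notMem_range j fun s => slotAction s (f 0) * placeAction j (Fin.tail f),
    derAction_eq_sum_slotAction, Finset.sum_mul]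
  simp only [slotAction_mul_placeAction j.injective]

variable {A : Type} [NonUnitalNonAssocSemiring A] [Module ℂ A] (ρ : A →ₙₐ[ℂ] Module.End ℂ W)

noncomputable def derActionSpan (d n : ℕ) : Submodule ℂ (Module.End ℂ (TPow W d)) :=
  Submodule.span ℂ {h | ∃ l : List A, l.length ≤ n ∧ h = (l.map fun a => derAction W d (ρ a)).prod}

theorem derActionSpan_mono {n n' : ℕ} (h : n ≤ n') : derActionSpan ρ d n ≤ derActionSpan ρ d n' :=
  Submodule.span_mono fun _ ⟨l, hl, he⟩ => ⟨l, hl.trans h, he⟩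

theorem derAction_mul_mem_derActionSpan {n : ℕ} (a : A) {x : Module.End ℂ (TPow W d)}
    (hx : x ∈ derActionSpan ρ d n) : derAction W d (ρ a) * x ∈ derActionSpan ρ d (n + 1) := by
  have hmap := Submodule.mem_map_of_mem (f := LinearMap.mulLeft ℂ (derAction W d (ρ a))) hx
  rw [derActionSpan, Submodule.map_span] at hmap
  refine Submodule.span_mono ?_ hmap
  rintro _ ⟨_, ⟨l, hl, rfl⟩, rfl⟩
  exact ⟨a :: l, by simpa using hl, by simp⟩

theorem sum_placeAction_mem_derActionSpan {p : ℕ} (m : Fin p → A) :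
    ∑ j : Fin p ↪ Fin d, placeAction j (fun i => ρ (m i)) ∈ derActionSpan ρ d p := by
  induction p with
  | zero =>
    rw [Fintype.sum_unique, placeAction_zero]
    exact Submodule.subset_span ⟨[], le_rfl, rfl⟩
  | succ p ih =>
    have hupdate : ∀ i, Function.update (Fin.tail fun k => ρ (m k)) i (ρ (m 0) * ρ (m i.succ))
        = fun k => ρ (Function.update (Fin.tail m) i (m 0 * m i.succ) k) := fun i => by
      rw [← map_mul]
      exact (funext (Function.apply_update (fun _ => ρ) (Fin.tail m) i _)).symm
    rw [sum_placeAction_succ]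
    refine sub_mem (derAction_mul_mem_derActionSpan ρ _ (ih _))
      (Submodule.sum_mem _ fun i _ => derActionSpan_mono ρ p.le_succ ?_)
    rw [Fin.tail, hupdate]
    exact ih _

end

/-- Ordered `p`-subsets of `{1,…,d}` are the embeddings `Fin p ↪ Fin d`, and `E_d` is described
through lifts to `W^{⊗d}` composed with the quotient map onto `Sym^d(W)`. -/
theorem g_phi_mem_E_d_general
    (A : Type) [NonUnitalRing A] [Module ℂ A]
    (W : Type) [AddCommGroup W] [Module ℂ W]
    (ρ : A →ₙₐ[ℂ] Module.End ℂ W) (d p : ℕ) (hp : p ≤ d) (m : Fin p → A) :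
    (symRel W d).mkQ.comp
        (∑ j : Fin p ↪ Fin d, (PiTensorProduct.map (fun s : Fin d =>
          (((List.finRange p).filter fun i => j i = s).map
            fun i => (ρ (m i) : W →ₗ[ℂ] W)).prod) : Module.End ℂ (TPow W d)))
      ∈ Submodule.span ℂ {h : TPow W d →ₗ[ℂ] SymPow W d |
          ∃ l : List A, l.length ≤ d ∧
            h = (symRel W d).mkQ.comp ((l.map fun a => derAction W d (ρ a)).prod)} := by
  have hmap := Submodule.mem_map_of_mem
    (f := LinearMap.llcomp ℂ (TPow W d) (TPow W d) (SymPow W d) (symRel W d).mkQ)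
    (derActionSpan_mono ρ hp (sum_placeAction_mem_derActionSpan ρ m))
  rw [derActionSpan, Submodule.map_span] at hmap
  refine Submodule.span_mono ?_ hmap
  rintro _ ⟨_, ⟨l, hl, rfl⟩, rfl⟩
  exact ⟨l, hl, rfl⟩

/-- The operator `g_φ` on `Sym^d(W)` attached to a partition `φ` of `{1,…,r}` into `p ≤ d`
blocks with associated monomials `m_1,…,m_p ∈ A`: it sums, over all ordered `p`-element
subsets `(j_1,…,j_p)` of `{1,…,d}` (i.e. embeddings `j : Fin p ↪ Fin d`), the map applying
`m_i` to the `j_i`-th factor and leaving the others fixed. It lies in the span `E_d` of the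
(descended) actions of elements of `U(A)` of degree at most `d` — here expressed on lifts
to `W^{⊗d}`, composed with the quotient map onto `Sym^d(W)`. -/
theorem g_phi_mem_E_d
    (A : Type) [NonUnitalRing A] [Module ℂ A] [SMulCommClass ℂ A A] [IsScalarTower ℂ A A]
    (W : Type) [AddCommGroup W] [Module ℂ W]
    (ρ : A →ₙₐ[ℂ] Module.End ℂ W) (d p : ℕ) (hp : p ≤ d) (m : Fin p → A) :
    (symRel W d).mkQ.comp
        (∑ j : Fin p ↪ Fin d, (PiTensorProduct.map (fun s : Fin d =>
          (((List.finRange p).filter fun i => j i = s).map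
            fun i => (ρ (m i) : W →ₗ[ℂ] W)).prod) : Module.End ℂ (TPow W d)))
      ∈ Submodule.span ℂ {h : TPow W d →ₗ[ℂ] SymPow W d |
          ∃ l : List A, l.length ≤ d ∧
            h = (symRel W d).mkQ.comp ((l.map fun a => derAction W d (ρ a)).prod)} :=
  g_phi_mem_E_d_general A W ρ d p hp m
end

section
/- For the (m+1)×(m+1) matrix B^w with entries B_{ij} = (−1)^{w+m+1+j} (w+m+1+j+i)!/(i+w)! for 0 ≤ i,j ≤ m (where w ≥ 1), B^w is invertible. -/
/-- The matrix `B^w` with entries `B_{ij} = (−1)^{w+m+1+j}(w+m+1+j+i)!/(i+w)!`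
for `0 ≤ i,j ≤ m`. -/
noncomputable def Bmat (w m : ℕ) : Matrix (Fin (m + 1)) (Fin (m + 1)) ℚ :=
  Matrix.of fun i j =>
    (-1 : ℚ) ^ (w + m + 1 + (j : ℕ)) *
      ((w + m + 1 + (j : ℕ) + (i : ℕ)).factorial : ℚ) / (((i : ℕ) + w).factorial : ℚ)

/-!
Write `r = w + m + 1`. Since `(r + j + i)! = (r + i)! · (r + i + 1)^(j)` (rising factorial),
`B^w` is the matrix `((ascPochhammer j).eval (r + i + 1))_{ij}` with its rows scaled by the
nonzero numbers `(r + i)! / (i + w)!` and its columns by the signs `(-1)^(r + j)`. The rising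
factorial `ascPochhammer j` is monic of degree `j`, so column operations reduce that matrix to
the Vandermonde matrix of the distinct nodes `r + i + 1`, whose determinant is nonzero.
-/

open Matrix

theorem det_of_ascPochhammer_eval_ne_zero {K : Type*} [Field K] {n : ℕ} {v : Fin n → K}
    (hv : Function.Injective v) :
    (Matrix.of fun i j : Fin n => (ascPochhammer K (j : ℕ)).eval (v i)).det ≠ 0 := by
  rw [← det_eval_matrixOfPolynomials_eq_det_vandermonde v _
    (fun j => ascPochhammer_natDegree K j) (fun j => monic_ascPochhammer K j)]
  exact det_vandermonde_ne_zero_iff.mpr hv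

theorem Nat.cast_factorial_add_eq_mul_ascPochhammer_eval {S : Type*} [CommSemiring S]
    (n k : ℕ) : ((n + k).factorial : S) =
      n.factorial * (ascPochhammer S k).eval ((n + 1 : ℕ) : S) := by
  rw [← ascPochhammer_eval_cast, ascPochhammer_nat_eq_ascFactorial,
    ← Nat.factorial_mul_ascFactorial, Nat.cast_mul]

theorem Bmat_eq_diagonal_mul_ascPochhammer_mul_diagonal (w m : ℕ) :
    Bmat w m =
      diagonal (fun i : Fin (m + 1) =>
          ((w + m + 1 + (i : ℕ)).factorial : ℚ) / (((i : ℕ) + w).factorial : ℚ)) *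
        (Matrix.of fun i j : Fin (m + 1) =>
          (ascPochhammer ℚ (j : ℕ)).eval ((w + m + 1 + (i : ℕ) + 1 : ℕ) : ℚ)) *
        diagonal (fun j : Fin (m + 1) => (-1 : ℚ) ^ (w + m + 1 + (j : ℕ))) := by
  ext i j
  rw [mul_diagonal, diagonal_mul, Bmat, of_apply, of_apply, add_right_comm _ (j : ℕ),
    Nat.cast_factorial_add_eq_mul_ascPochhammer_eval]
  ring

theorem Bmat_isUnit_general (w m : ℕ) : IsUnit (Bmat w m) := by
  have hnodes : Function.Injective fun i : Fin (m + 1) => ((w + m + 1 + (i : ℕ) + 1 : ℕ) : ℚ) :=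
    fun i j hij => Fin.ext (by simpa using hij)
  have hfac (n : ℕ) : (n.factorial : ℚ) ≠ 0 := by positivity
  rw [isUnit_iff_isUnit_det, isUnit_iff_ne_zero,
    Bmat_eq_diagonal_mul_ascPochhammer_mul_diagonal, det_mul, det_mul, det_diagonal,
    det_diagonal]
  refine mul_ne_zero (mul_ne_zero ?_ (det_of_ascPochhammer_eval_ne_zero hnodes)) ?_
  · exact Finset.prod_ne_zero_iff.mpr fun i _ => div_ne_zero (hfac _) (hfac _)
  · exact Finset.prod_ne_zero_iff.mpr fun j _ => pow_ne_zero _ (neg_ne_zero.mpr one_ne_zero)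

/-- For `w ≥ 1`, the matrix `B^w` is invertible. -/
theorem Bmat_isUnit (w m : ℕ) (hw : 1 ≤ w) : IsUnit (Bmat w m) :=
  Bmat_isUnit_general w m
end

section
/- Let a, b, c be elements of a vertex (super)algebra and n ∈ ℤ. Then (:ab:) ∘_n c = Σ_{k≥0} (1/k!) :(∂^k a)(b ∘_{n+k} c): + (−1)^{|a||b|} Σ_{k≥0} b ∘_{n−k−1}(a ∘_k c). -/
/-- Generalized binomial coefficient `C(m, l) = m(m−1)⋯(m−l+1)/l!` for `m ∈ ℤ`. -/
noncomputable def zc (m : ℤ) (l : ℕ) : ℂ :=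
  (∏ i ∈ Finset.range l, ((m : ℂ) - (i : ℂ))) / (l.factorial : ℂ)

/-- The Koszul sign `(−1)^{|a||b|}` for parities `i, j ∈ ℤ/2`. -/
noncomputable def sgn (i j : ZMod 2) : ℂ := (-1 : ℂ) ^ ((i * j).val)

/-- A vertex superalgebra: a `ℤ/2`-graded `ℂ`-vector space with `ℤ`-indexed circle products
`∘_n`, a vacuum vector, a translation operator, satisfying truncation, vacuum, translation,
grading axioms and the Borcherds identity (with Koszul signs). The Wick product is
`:ab: = a ∘_{−1} b`. -/
class VertexSuperAlg (V : Type) [AddCommGroup V] [Module ℂ V] where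
  pr : ℤ → V →ₗ[ℂ] V →ₗ[ℂ] V
  vac : V
  T : Module.End ℂ V
  deg : ZMod 2 → Submodule ℂ V
  grading : ∀ v : V, ∃ v0 ∈ deg 0, ∃ v1 ∈ deg 1, v = v0 + v1
  vac_deg : vac ∈ deg 0
  pr_deg : ∀ (i j : ZMod 2) (n : ℤ) (a b : V), a ∈ deg i → b ∈ deg j → pr n a b ∈ deg (i + j)
  T_deg : ∀ (i : ZMod 2) (a : V), a ∈ deg i → T a ∈ deg i
  trunc : ∀ a b : V, ∃ N : ℕ, ∀ n : ℕ, N ≤ n → pr (n : ℤ) a b = 0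
  vac_left : ∀ (n : ℤ) (a : V), pr n vac a = if n = -1 then a else 0
  create : ∀ (a : V) (n : ℤ), 0 ≤ n → pr n a vac = 0
  create_neg_one : ∀ a : V, pr (-1) a vac = a
  T_def : ∀ a : V, T a = pr (-2) a vac
  T_deriv : ∀ (a b : V) (n : ℤ), pr n (T a) b = (-n : ℂ) • pr (n - 1) a b
  borcherds : ∀ (i j : ZMod 2) (a b c : V), a ∈ deg i → b ∈ deg j → ∀ m n k : ℤ,
    (∑ᶠ l : ℕ, zc m l • pr (m + k - l) (pr (n + l) a b) c)
      = ∑ᶠ l : ℕ, ((-1 : ℂ) ^ l * zc n l) •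
          (pr (m + n - l) a (pr (k + l) b c)
            - (sgn i j * (-1 : ℂ) ^ n) • pr (n + k - l) b (pr (m + l) a c))

open VertexSuperAlg

/-!
This is the Borcherds identity with `m = 0` and `n = −1`. Since `C(0, l)` vanishes
for `l > 0`, the left side collapses to `(:ab:) ∘_k c`, and since `(−1)^l C(−1, l) = 1` every term
on the right enters with coefficient one. Finally `∂^k a ∘_{−1} x = k! · a ∘_{−1−k} x` by the
translation axiom, which turns `a ∘_{−1−l}` into `(1/l!) (∂^l a) ∘_{−1}`.
-/

open Filter

lemma zc_zero_right (m : ℤ) : zc m 0 = 1 := by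
  simp [zc]

lemma zc_zero_left {l : ℕ} (hl : l ≠ 0) : zc 0 l = 0 := by
  rw [zc, Finset.prod_eq_zero (Finset.mem_range.mpr (Nat.pos_of_ne_zero hl)) (by simp), zero_div]

lemma zc_neg_one (l : ℕ) : zc (-1) l = (-1 : ℂ) ^ l := by
  have hprod : (∏ i ∈ Finset.range l, ((-1 : ℂ) - (i : ℂ))) = (-1) ^ l * (l.factorial : ℂ) := by
    induction l with
    | zero => simp
    | succ k ih =>
      rw [Finset.prod_range_succ, ih]
      push_cast [Nat.factorial_succ]
      ring
  rw [zc, Int.cast_neg, Int.cast_one, hprod,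
    mul_div_cancel_right₀ _ (Nat.cast_ne_zero.mpr l.factorial_ne_zero)]

lemma support_finite_of_eventually_eq_zero {M : Type*} [Zero M] {f : ℕ → M}
    (hf : ∀ᶠ l in atTop, f l = 0) :
    (Function.support f).Finite := by
  rw [← Nat.cofinite_eq_atTop] at hf
  exact eventually_cofinite.mp hf

section VertexSuperAlg

variable {V : Type} [AddCommGroup V] [Module ℂ V] [VertexSuperAlg V]

lemma eventually_pr_add_eq_zero (a b : V) (n : ℤ) :
    ∀ᶠ l : ℕ in atTop, pr (n + l) a b = 0 := by
  obtain ⟨N, hN⟩ := trunc a b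
  filter_upwards [eventually_ge_atTop (N + n.natAbs)] with l hl
  rw [show n + (l : ℤ) = ((n + l).toNat : ℕ) by omega, hN _ (by omega)]

lemma eventually_pr_natCast_eq_zero (a b : V) :
    ∀ᶠ l : ℕ in atTop, pr (l : ℤ) a b = 0 := by
  simpa using eventually_pr_add_eq_zero a b 0

lemma pr_neg_one_T_pow (k : ℕ) (a x : V) :
    pr (-1) ((T ^ k) a) x = (k.factorial : ℂ) • pr (-1 - k) a x := by
  induction k generalizing a with
  | zero => simp
  | succ m ih =>
    rw [pow_succ, Module.End.mul_apply, ih, T_deriv, smul_smul,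
      show (-1 - m - 1 : ℤ) = -1 - ((m + 1 : ℕ) : ℤ) by push_cast; ring]
    push_cast [Nat.factorial_succ]
    ring_nf

lemma pr_wick_eq_finsum {i j : ZMod 2} {a b : V} (ha : a ∈ deg i) (hb : b ∈ deg j) (c : V)
    (k : ℤ) :
    pr k (pr (-1) a b) c
      = ∑ᶠ l : ℕ, (pr (-1 - l) a (pr (k + l) b c) + sgn i j • pr (k - l - 1) b (pr l a c)) := by
  have hB := borcherds i j a b c ha hb 0 (-1) k
  rw [finsum_eq_single _ 0 fun l hl => by rw [zc_zero_left hl, zero_smul]] at hB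
  convert hB using 2
  · simp [zc_zero_right]
  · ext l
    rw [zc_neg_one, ← pow_add, ← two_mul, pow_mul, neg_one_sq, one_pow, one_smul,
      zpow_neg_one, inv_neg_one, mul_neg_one, neg_smul, sub_neg_eq_add]
    ring_nf

end VertexSuperAlg

/-- For homogeneous `a, b` of parities `i, j`, any `c` and any `n ∈ ℤ`,
`(:ab:) ∘_n c = Σ_{k≥0} (1/k!) :(∂^k a)(b ∘_{n+k} c): + (−1)^{|a||b|} Σ_{k≥0} b ∘_{n−k−1}(a ∘_k c)`. -/
theorem wick_product_circle_formula (V : Type) [AddCommGroup V] [Module ℂ V]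
    [VertexSuperAlg V] (i j : ZMod 2) (a b c : V)
    (ha : a ∈ deg (V := V) i) (hb : b ∈ deg (V := V) j) (n : ℤ) :
    pr n (pr (-1) a b) c
      = (∑ᶠ k : ℕ, ((k.factorial : ℂ))⁻¹ • pr (-1) ((T ^ k) a) (pr (n + k) b c))
        + sgn i j • ∑ᶠ k : ℕ, pr (n - k - 1) b (pr (k : ℤ) a c) := by
  have hwick : (Function.support fun l : ℕ => pr (-1 - l) a (pr (n + l) b c)).Finite :=
    support_finite_of_eventually_eq_zero <| (eventually_pr_add_eq_zero b c n).mono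
      fun l hl => by rw [hl, map_zero]
  have hcirc : (Function.support fun l : ℕ => pr (n - l - 1) b (pr l a c)).Finite :=
    support_finite_of_eventually_eq_zero <| (eventually_pr_natCast_eq_zero a c).mono
      fun l hl => by rw [hl, map_zero]
  rw [pr_wick_eq_finsum ha hb, finsum_add_distrib (g := fun l : ℕ => sgn i j • _) hwick
    (hcirc.subset (Function.support_const_smul_subset _ _)), smul_finsum' _ hcirc]
  congr 1
  refine finsum_congr fun k => ?_
  rw [pr_neg_one_T_pow, smul_smul, inv_mul_cancel₀ (Nat.cast_ne_zero.mpr k.factorial_ne_zero),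
    one_smul]
end
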